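/- The integral ∫₀^∞ ν³/(e^{aν} − 1) dν converges for every a > 0 and equals π⁴/(15a⁴); consequently the total black-body radiance obeys the Stefan–Boltzmann law Ī_bb(T) = (2h/c²)·(k_B T/h)⁴·π⁴/15, i.e. it is proportional to T⁴. -/

import Mathlib

/-!
Expanding `1 / (e^x - 1) = ∑_{n ≥ 0} e^{-(n+1)x}` and integrating term by term (legitimate since
all terms are nonnegative with summable integrals) gives
`∫₀^∞ ν^(s-1) / (e^{aν} - 1) dν = ∑ₙ Γ(s) / ((n+1)a)^s = Γ(s) ζ(s) / a^s` for `s > 1`.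
At `s = 4` this is `Γ(4) ζ(4) / a⁴ = 6 · (π⁴/90) / a⁴ = π⁴ / (15 a⁴)`, and the Stefan–Boltzmann law
is the case `a = h / (k_B T)`. Integrability needs no separate estimate: a non-integrable function
has Bochner integral `0`, and the value found is positive.
-/

open MeasureTheory Set Real

theorem hasSum_exp_neg_succ_mul {x : ℝ} (hx : 0 < x) :
    HasSum (fun n : ℕ => exp (-((n + 1) * x))) (1 / (exp x - 1)) := by
  have hr : exp (-x) < 1 := exp_lt_one_iff.mpr (neg_lt_zero.mpr hx)
  have hsum : exp (-x) * (1 - exp (-x))⁻¹ = 1 / (exp x - 1) := by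
    have : exp x - 1 ≠ 0 := (sub_pos.mpr (one_lt_exp_iff.mpr hx)).ne'
    have : 1 - exp (-x) ≠ 0 := (sub_pos.mpr hr).ne'
    rw [exp_neg]
    field_simp
  refine hsum ▸ ((hasSum_geometric_of_lt_one (exp_pos _).le hr).mul_left _).congr_fun fun n => ?_
  rw [← pow_succ', ← exp_nat_mul]
  push_cast
  ring_nf

theorem summable_one_div_succ_mul_rpow {s a : ℝ} (hs : 1 < s) (ha : 0 ≤ a) :
    Summable fun n : ℕ => (1 / ((n + 1) * a)) ^ s := by
  have h := (summable_nat_add_iff 1).mpr (Real.summable_one_div_nat_rpow.mpr hs)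
  refine (h.mul_right ((1 / a) ^ s)).congr fun n => ?_
  push_cast
  rw [← one_div_mul_one_div, mul_rpow (by positivity) (by positivity),
    div_rpow zero_le_one (n.cast_add_one_pos (α := ℝ)).le, one_rpow]

theorem hasSum_integral_rpow_div_exp_sub_one {s a : ℝ} (hs : 1 < s) (ha : 0 < a) :
    HasSum (fun n : ℕ => (1 / ((n + 1) * a)) ^ s * Gamma s)
      (∫ ν in Ioi (0 : ℝ), ν ^ (s - 1) / (exp (a * ν) - 1)) := by
  set F : ℕ → ℝ → ℝ := fun n ν => ν ^ (s - 1) * exp (-((n + 1) * a * ν))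
  have hF_integral n : ∫ ν in Ioi (0 : ℝ), F n ν = (1 / ((n + 1) * a)) ^ s * Gamma s :=
    integral_rpow_mul_exp_neg_mul_Ioi (by linarith) (by positivity)
  have hF_int n : IntegrableOn (F n) (Ioi 0) :=
    Integrable.of_integral_ne_zero <| by rw [hF_integral]; positivity
  have hF_norm n : ∫ ν in Ioi (0 : ℝ), ‖F n ν‖ = ∫ ν in Ioi (0 : ℝ), F n ν :=
    setIntegral_congr_fun measurableSet_Ioi fun ν hν =>
      norm_of_nonneg (mul_nonneg (rpow_nonneg (le_of_lt hν) _) (exp_pos _).le)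
  have hF_sum : Summable fun n => ∫ ν in Ioi (0 : ℝ), ‖F n ν‖ := by
    simp_rw [hF_norm, hF_integral]
    exact (summable_one_div_succ_mul_rpow hs ha.le).mul_right _
  have hF_pointwise : ∀ ν ∈ Ioi (0 : ℝ), HasSum (F · ν) (ν ^ (s - 1) / (exp (a * ν) - 1)) := by
    intro ν hν
    have := (hasSum_exp_neg_succ_mul (mul_pos ha hν)).mul_left (ν ^ (s - 1))
    simpa [F, mul_assoc, div_eq_mul_inv] using this
  have hswap := hasSum_integral_of_summable_integral_norm hF_int hF_sum
  rwa [funext hF_integral, setIntegral_congr_fun measurableSet_Ioi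
    fun ν hν => (hF_pointwise ν hν).tsum_eq] at hswap

theorem hasSum_one_div_succ_pow_four :
    HasSum (fun n : ℕ => 1 / ((n : ℝ) + 1) ^ 4) (π ^ 4 / 90) := by
  simpa using (hasSum_nat_add_iff' 1).mpr hasSum_zeta_four

theorem integral_pow_three_div_exp_sub_one {a : ℝ} (ha : 0 < a) :
    ∫ ν in Ioi (0 : ℝ), ν ^ 3 / (exp (a * ν) - 1) = π ^ 4 / (15 * a ^ 4) := by
  have h := hasSum_integral_rpow_div_exp_sub_one (s := 4) (by norm_num) ha
  have hGamma : Gamma 4 = 6 := by simp [Nat.factorial]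
  norm_num [hGamma] at h
  have hzeta := hasSum_one_div_succ_pow_four.mul_left (6 / a ^ 4)
  rw [h.unique (hzeta.congr_fun fun n => by field_simp)]
  field_simp
  norm_num

theorem integrableOn_pow_three_div_exp_sub_one {a : ℝ} (ha : 0 < a) :
    IntegrableOn (fun ν => ν ^ 3 / (exp (a * ν) - 1)) (Ioi (0 : ℝ)) :=
  Integrable.of_integral_ne_zero <| by
    rw [integral_pow_three_div_exp_sub_one ha]; positivity

theorem stefan_boltzmann_law_general
    (h c kB : ℝ) (hh : 0 < h) (hk : 0 < kB)
    (T : ℝ) (hT : 0 < T) :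
    (∀ a : ℝ, 0 < a →
      IntegrableOn (fun ν => ν ^ 3 / (Real.exp (a * ν) - 1)) (Ioi (0 : ℝ)) ∧
      ∫ ν in Ioi (0 : ℝ), ν ^ 3 / (Real.exp (a * ν) - 1) = π ^ 4 / (15 * a ^ 4)) ∧
    ∫ ν in Ioi (0 : ℝ),
        (2 * h * ν ^ 3 / c ^ 2) * (1 / (Real.exp (h * ν / (kB * T)) - 1))
      = (2 * h / c ^ 2) * (kB * T / h) ^ 4 * π ^ 4 / 15 := by
  refine ⟨fun a ha => ⟨integrableOn_pow_three_div_exp_sub_one ha,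
    integral_pow_three_div_exp_sub_one ha⟩, ?_⟩
  have hplanck ν : (2 * h * ν ^ 3 / c ^ 2) * (1 / (exp (h * ν / (kB * T)) - 1))
      = (2 * h / c ^ 2) * (ν ^ 3 / (exp (h / (kB * T) * ν) - 1)) := by
    rw [div_mul_eq_mul_div h (kB * T) ν]
    ring
  simp_rw [hplanck]
  rw [integral_const_mul, integral_pow_three_div_exp_sub_one (by positivity)]
  field_simp

/-- `∫₀^∞ ν³/(e^{aν} − 1) dν` converges for every `a > 0` and equals `π⁴/(15a⁴)`;
consequently the total black-body radiance obeys the Stefan–Boltzmann law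
`Ī_bb(T) = (2h/c²)·(k_B T/h)⁴·π⁴/15`. -/
theorem stefan_boltzmann_law
    (h c kB : ℝ) (hh : 0 < h) (hc : 0 < c) (hk : 0 < kB)
    (T : ℝ) (hT : 0 < T) :
    (∀ a : ℝ, 0 < a →
      IntegrableOn (fun ν => ν ^ 3 / (Real.exp (a * ν) - 1)) (Ioi (0 : ℝ)) ∧
      ∫ ν in Ioi (0 : ℝ), ν ^ 3 / (Real.exp (a * ν) - 1) = π ^ 4 / (15 * a ^ 4)) ∧
    ∫ ν in Ioi (0 : ℝ),
        (2 * h * ν ^ 3 / c ^ 2) * (1 / (Real.exp (h * ν / (kB * T)) - 1))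
      = (2 * h / c ^ 2) * (kB * T / h) ^ 4 * π ^ 4 / 15 :=
  stefan_boltzmann_law_general h c kB hh hk T hT
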